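/- arXiv:2210.13607 — 4 statements merged into one kernel-verified Lean document; each statement's English description precedes it below -/
import Mathlib

section
/- If X_k is defined by X_0 = 1 and X_k = X_{k-1} + β(X_{k-1}·ξ − ∂_ξ X_{k-1}) for a real parameter β ≠ 0, then X_k = β^k · H_k(β^{-1} + ξ), where H_k is the k-th Hermite polynomial. -/
/-!
Both families are determined by their first term and a first-order recursion, so it suffices
that `Y k x = β ^ k * H k (β⁻¹ + x)` obeys the recursion of `X`. It does: with `y = β⁻¹ + x`,
`Y k + β * (x * Y k - Y k') = β ^ (k + 1) * (y * H k y - H k' y)`, because the summand `Y k`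
supplies exactly the `β⁻¹` part of `y`.
-/

open Polynomial

theorem eq_of_succ_eq_apply {α : Type*} (T : α → α) {F G : ℕ → α} (h0 : F 0 = G 0)
    (hF : ∀ k, F (k + 1) = T (F k)) (hG : ∀ k, G (k + 1) = T (G k)) : F = G := by
  funext k
  induction k with
  | zero => exact h0
  | succ k ih => rw [hF, hG, ih]

section Hermite

variable {𝕜 : Type*} [NontriviallyNormedField 𝕜]

theorem aeval_hermite_succ (k : ℕ) (x : 𝕜) :
    aeval x (hermite (k + 1)) =
      x * aeval x (hermite k) - deriv (fun y => aeval y (hermite k)) x := by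
  simp [hermite_succ]

theorem pow_mul_aeval_hermite_add_succ {β : 𝕜} (hβ : β ≠ 0) (k : ℕ) (x : 𝕜) :
    β ^ (k + 1) * aeval (β⁻¹ + x) (hermite (k + 1)) =
      β ^ k * aeval (β⁻¹ + x) (hermite k) +
        β * (β ^ k * aeval (β⁻¹ + x) (hermite k) * x -
          deriv (fun y => β ^ k * aeval (β⁻¹ + y) (hermite k)) x) := by
  rw [deriv_const_mul_field, deriv_comp_const_add (fun y => aeval y (hermite k)),
    aeval_hermite_succ]
  field_simp
  ring

end Hermite

/-- If `X 0 = 1` and `X k = X (k-1) + β * (X (k-1) * ξ - ∂_ξ X (k-1))` for a real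
parameter `β ≠ 0`, then `X k ξ = β ^ k * H k (β⁻¹ + ξ)`, where `H k` is the `k`-th
Hermite polynomial (with `H 0 = 1` and `H (k+1) x = x * H k x - H k' x`). -/
theorem skorokhod_affine_recursion_eq_hermite
    (H : ℕ → ℝ → ℝ)
    (hH0 : ∀ x, H 0 x = 1)
    (hHrec : ∀ k x, H (k + 1) x = x * H k x - deriv (H k) x)
    (β : ℝ) (hβ : β ≠ 0)
    (X : ℕ → ℝ → ℝ)
    (hX0 : ∀ x, X 0 x = 1)
    (hXrec : ∀ k x, X (k + 1) x = X k x + β * (X k x * x - deriv (X k) x)) :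
    ∀ (k : ℕ) (x : ℝ), X k x = β ^ k * H k (β⁻¹ + x) := by
  have hH : H = fun k x => aeval x (hermite k) :=
    eq_of_succ_eq_apply (fun f x => x * f x - deriv f x) (funext fun x => by simp [hH0])
      (fun k => funext (hHrec k)) (fun k => funext (aeval_hermite_succ k))
  have hX : X = fun k x => β ^ k * aeval (β⁻¹ + x) (hermite k) :=
    eq_of_succ_eq_apply (fun f x => f x + β * (f x * x - deriv f x))
      (funext fun x => by simp [hX0]) (fun k => funext (hXrec k))
      (fun k => funext (pow_mul_aeval_hermite_add_succ hβ k))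
  intro k x
  rw [hX, hH]
end

section
/- Suppose each |m_i| ≤ b_i almost surely for deterministic constants b_i < ∞. Then the almost-sure limit Z of the martingale Z_n = E_Q exp(Σ_{j=1}^n m_j ξ_j − m_j²/2) satisfies P(Z = 0) ∈ {0, 1}. -/
open MeasureTheory ProbabilityTheory Filter

open Asymptotics Real Topology Finset

/-!
Since `|m_j| ≤ b_j`, the first `k` factors of the integrand of `Z_n` lie between
`exp (-C_k)` and `exp C_k` with `C_k = ∑_{j<k} (b_j |ξ_j| + b_j² / 2)` independent of `q`.
Hence `Z_n → 0` iff the same integral with the first `k` coordinates removed tends to `0`,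
so `{Z_n → 0}` is a tail event of the independent `ξ_j`, and Kolmogorov's 0-1 law applies to it;
almost surely it coincides with `{Z = 0}`.
-/

section ExpPerturbation

variable {Ω : Type*} [MeasurableSpace Ω] {μ : Measure Ω} {f g : Ω → ℝ} {c : ℝ}

lemma ae_exp_add_le_of_abs_le (hfc : ∀ᵐ q ∂μ, |f q| ≤ c) :
    ∀ᵐ q ∂μ, exp (f q + g q) ≤ exp c * exp (g q) := by
  filter_upwards [hfc] with q hq
  rw [exp_add]
  exact mul_le_mul_of_nonneg_right (exp_le_exp.2 ((le_abs_self _).trans hq)) (exp_pos _).le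

lemma integrable_exp_add_of_abs_le (hf : AEStronglyMeasurable f μ) (hfc : ∀ᵐ q ∂μ, |f q| ≤ c)
    (hg : Integrable (fun q => exp (g q)) μ) : Integrable (fun q => exp (f q + g q)) μ := by
  simp_rw [exp_add]
  refine hg.bdd_mul (c := exp c) (continuous_exp.comp_aestronglyMeasurable hf) ?_
  filter_upwards [hfc] with q hq
  rw [norm_of_nonneg (exp_pos _).le]
  exact exp_le_exp.2 ((le_abs_self _).trans hq)

lemma integral_exp_add_le_of_abs_le (hf : AEStronglyMeasurable f μ) (hfc : ∀ᵐ q ∂μ, |f q| ≤ c)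
    (hg : Integrable (fun q => exp (g q)) μ) :
    ∫ q, exp (f q + g q) ∂μ ≤ exp c * ∫ q, exp (g q) ∂μ := by
  rw [← integral_const_mul]
  exact integral_mono_ae (integrable_exp_add_of_abs_le hf hfc hg) (hg.const_mul _)
    (ae_exp_add_le_of_abs_le hfc)

lemma integral_exp_le_of_abs_le (hf : AEStronglyMeasurable f μ) (hfc : ∀ᵐ q ∂μ, |f q| ≤ c)
    (hg : Integrable (fun q => exp (g q)) μ) :
    ∫ q, exp (g q) ∂μ ≤ exp c * ∫ q, exp (f q + g q) ∂μ := by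
  have hfc' : ∀ᵐ q ∂μ, |-f q| ≤ c := by simpa only [abs_neg] using hfc
  simpa only [Pi.neg_apply, neg_add_cancel_left] using
    integral_exp_add_le_of_abs_le hf.neg hfc' (integrable_exp_add_of_abs_le hf hfc hg)

lemma isTheta_integral_exp_add {ι : Type*} {l : Filter ι} {g : ι → Ω → ℝ}
    (hf : AEStronglyMeasurable f μ) (hfc : ∀ᵐ q ∂μ, |f q| ≤ c)
    (hg : ∀ i, Integrable (fun q => exp (g i q)) μ) :
    (fun i => ∫ q, exp (f q + g i q) ∂μ) =Θ[l] fun i => ∫ q, exp (g i q) ∂μ := by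
  have hnorm : ∀ h : Ω → ℝ, ‖∫ q, exp (h q) ∂μ‖ = ∫ q, exp (h q) ∂μ := fun h =>
    norm_of_nonneg (integral_nonneg fun q => (exp_pos _).le)
  refine ⟨.of_bound (exp c) (.of_forall fun i => ?_), .of_bound (exp c) (.of_forall fun i => ?_)⟩
  · simpa only [hnorm] using integral_exp_add_le_of_abs_le hf hfc (hg i)
  · simpa only [hnorm] using integral_exp_le_of_abs_le hf hfc (hg i)

end ExpPerturbation

noncomputable section PartitionFunction

variable {Ω : Type*} {m : ℕ → Ω → ℝ}

/-- The exponent `∑_{j ∈ s} (m_j ξ_j - m_j² / 2)` with the `ξ_j` replaced by a sequence `x`. -/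
def partitionEnergy (m : ℕ → Ω → ℝ) (s : Finset ℕ) (x : ℕ → ℝ) (q : Ω) : ℝ :=
  ∑ j ∈ s, (m j q * x j - m j q ^ 2 / 2)

lemma partitionEnergy_indicator (s : Finset ℕ) (x : ℕ → ℝ) :
    partitionEnergy m s ((s : Set ℕ).indicator x) = partitionEnergy m s x :=
  funext fun _ => Finset.sum_congr rfl fun j hj => by rw [Set.indicator_of_mem (by simpa using hj)]

lemma partitionEnergy_range_add_Ico {k n : ℕ} (hkn : k ≤ n) (x : ℕ → ℝ) (q : Ω) :
    partitionEnergy m (range k) x q + partitionEnergy m (Ico k n) x q =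
      partitionEnergy m (range n) x q :=
  Finset.sum_range_add_sum_Ico _ hkn

lemma abs_partitionEnergy_le {b : ℕ → ℝ} {s : Finset ℕ} {q : Ω} (hb : ∀ j, |m j q| ≤ b j)
    (x : ℕ → ℝ) :
    |partitionEnergy m s x q| ≤ ∑ j ∈ s, (b j * |x j| + b j ^ 2 / 2) := by
  refine (Finset.abs_sum_le_sum_abs _ _).trans (Finset.sum_le_sum fun j _ => ?_)
  have hsq : m j q ^ 2 ≤ b j ^ 2 := sq_le_sq' (abs_le.1 (hb j)).1 (abs_le.1 (hb j)).2
  calc |m j q * x j - m j q ^ 2 / 2|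
      ≤ |m j q * x j| + |m j q ^ 2 / 2| := abs_sub _ _
    _ = |m j q| * |x j| + m j q ^ 2 / 2 := by
        rw [abs_mul, abs_of_nonneg (by positivity : (0 : ℝ) ≤ m j q ^ 2 / 2)]
    _ ≤ b j * |x j| + b j ^ 2 / 2 := by gcongr; exact hb j

variable [MeasurableSpace Ω] {Q : Measure Ω}

def partitionFunction (Q : Measure Ω) (m : ℕ → Ω → ℝ) (s : Finset ℕ) (x : ℕ → ℝ) : ℝ :=
  ∫ q, exp (partitionEnergy m s x q) ∂Q

lemma measurable_partitionEnergy (hm : ∀ j, Measurable (m j)) (s : Finset ℕ) :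
    Measurable fun p : (ℕ → ℝ) × Ω => partitionEnergy m s p.1 p.2 :=
  Finset.measurable_sum s fun j _ =>
    (((hm j).comp measurable_snd).mul ((measurable_pi_apply j).comp measurable_fst)).sub
      ((((hm j).comp measurable_snd).pow_const 2).div_const 2)

lemma integrable_exp_partitionEnergy [IsFiniteMeasure Q] (hm : ∀ j, Measurable (m j))
    {b : ℕ → ℝ} (hb : ∀ᵐ q ∂Q, ∀ j, |m j q| ≤ b j) (s : Finset ℕ) (x : ℕ → ℝ) :
    Integrable (fun q => exp (partitionEnergy m s x q)) Q := by
  simpa only [add_zero] using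
    integrable_exp_add_of_abs_le (f := partitionEnergy m s x) (g := fun _ => 0)
      ((measurable_partitionEnergy hm s).comp measurable_prodMk_left).aestronglyMeasurable
      (hb.mono fun q hq => abs_partitionEnergy_le hq x) (integrable_const (exp 0))

lemma isTheta_partitionFunction_range_Ico [IsFiniteMeasure Q] (hm : ∀ j, Measurable (m j))
    {b : ℕ → ℝ} (hb : ∀ᵐ q ∂Q, ∀ j, |m j q| ≤ b j) (k : ℕ) (x : ℕ → ℝ) :
    (fun n => partitionFunction Q m (range n) x) =Θ[atTop]
      fun n => partitionFunction Q m (Ico k n) x := by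
  have hsplit : (fun n => partitionFunction Q m (range n) x) =ᶠ[atTop]
      fun n => ∫ q, exp (partitionEnergy m (range k) x q + partitionEnergy m (Ico k n) x q) ∂Q := by
    filter_upwards [eventually_ge_atTop k] with n hkn
    simp only [partitionFunction, partitionEnergy_range_add_Ico hkn]
  exact hsplit.trans_isTheta <| isTheta_integral_exp_add
    ((measurable_partitionEnergy hm _).comp measurable_prodMk_left).aestronglyMeasurable
    (hb.mono fun q hq => abs_partitionEnergy_le hq x)
    fun n => integrable_exp_partitionEnergy hm hb (Ico k n) x

lemma measurable_partitionFunction [SFinite Q] (hm : ∀ j, Measurable (m j)) (s : Finset ℕ) :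
    Measurable (partitionFunction Q m s) :=
  (measurable_partitionEnergy hm s).exp.stronglyMeasurable.integral_prod_right'.measurable

lemma measurable_partitionFunction_comp [SFinite Q] (hm : ∀ j, Measurable (m j))
    {Ξ : Type*} {M : MeasurableSpace Ξ} {ξ : ℕ → Ξ → ℝ} {s : Finset ℕ}
    (hξ : ∀ j ∈ s, Measurable[M] (ξ j)) :
    Measurable[M] fun ω => partitionFunction Q m s (ξ · ω) := by
  have hind : Measurable[M] fun ω => (s : Set ℕ).indicator (ξ · ω) := by
    refine measurable_pi_lambda _ fun j => ?_
    by_cases hj : j ∈ s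
    · simpa [hj] using hξ j hj
    · simp [hj]
  simpa only [Function.comp_def, partitionFunction, partitionEnergy_indicator] using
    (measurable_partitionFunction (Q := Q) hm s).comp hind

lemma measurableSet_tendsto_partitionFunction_zero [IsFiniteMeasure Q]
    (hm : ∀ j, Measurable (m j)) {b : ℕ → ℝ} (hb : ∀ᵐ q ∂Q, ∀ j, |m j q| ≤ b j)
    {Ξ : Type*} [MeasurableSpace Ξ] (ξ : ℕ → Ξ → ℝ) :
    MeasurableSet[limsup (fun j => MeasurableSpace.comap (ξ j) inferInstance) atTop]
      {ω | Tendsto (fun n => partitionFunction Q m (range n) (ξ · ω)) atTop (𝓝 0)} := by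
  rw [limsup_eq_iInf_iSup_of_nat, MeasurableSpace.measurableSet_iInf]
  intro k
  have hξ : ∀ n, ∀ j ∈ Ico k n,
      Measurable[⨆ i ≥ k, MeasurableSpace.comap (ξ i) inferInstance] (ξ j) :=
    fun n j hj => measurable_iff_comap_le.2 <|
      le_iSup₂ (f := fun i (_ : i ≥ k) => MeasurableSpace.comap (ξ i) inferInstance) j
        (mem_Ico.1 hj).1
  simp_rw [(isTheta_partitionFunction_range_Ico hm hb k _).tendsto_zero_iff]
  exact measurableSet_tendsto _ fun n => measurable_partitionFunction_comp hm (hξ n)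

end PartitionFunction

lemma setOf_eq_ae_eq_setOf_tendsto {α ι : Type*} [MeasurableSpace α] {μ : Measure α}
    {l : Filter ι} [l.NeBot] {f : ι → α → ℝ} {g : α → ℝ} (a : ℝ)
    (hfg : ∀ᵐ x ∂μ, Tendsto (f · x) l (𝓝 (g x))) :
    {x | g x = a} =ᵐ[μ] {x | Tendsto (f · x) l (𝓝 a)} := by
  filter_upwards [hfg] with x hx
  exact propext ⟨fun h => h ▸ hx, tendsto_nhds_unique hx⟩

theorem partition_function_zero_one_law_general
    {Ξ : Type*} [MeasurableSpace Ξ] (P : Measure Ξ) [IsProbabilityMeasure P]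
    {Ω : Type*} [MeasurableSpace Ω] (Q : Measure Ω) [IsProbabilityMeasure Q]
    (ξ : ℕ → Ξ → ℝ) (hξmeas : ∀ j, Measurable (ξ j))
    (hindep : iIndepFun ξ P)
    (m : ℕ → Ω → ℝ) (hm : ∀ j, Measurable (m j))
    (b : ℕ → ℝ) (hb : ∀ᵐ q ∂Q, ∀ i, |m i q| ≤ b i)
    (Z : ℕ → Ξ → ℝ)
    (hZ : ∀ n ω, Z n ω =
      ∫ q, Real.exp (∑ j ∈ Finset.range n, (m j q * ξ j ω - (m j q) ^ 2 / 2)) ∂Q)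
    (Zlim : Ξ → ℝ)
    (hconv : ∀ᵐ ω ∂P, Tendsto (fun n => Z n ω) atTop (nhds (Zlim ω))) :
    P {ω | Zlim ω = 0} = 0 ∨ P {ω | Zlim ω = 0} = 1 := by
  have hZ' : Z = fun n ω => partitionFunction Q m (range n) (ξ · ω) := funext₂ hZ
  rw [measure_congr (setOf_eq_ae_eq_setOf_tendsto 0 hconv), hZ']
  exact measure_zero_or_one_of_measurableSet_limsup_atTop (fun j => (hξmeas j).comap_le) hindep
    (measurableSet_tendsto_partitionFunction_zero hm hb ξ)

/-- Zero–one law for the partition function: if each `|m_i| ≤ b_i` a.s. for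
deterministic constants `b_i`, then the a.s. limit `Z` of the martingale
`Z_n = E_Q exp (∑_{j<n} (m_j ξ_j - m_j²/2))` satisfies `P(Z = 0) ∈ {0, 1}`. -/
theorem partition_function_zero_one_law
    {Ξ : Type*} [MeasurableSpace Ξ] (P : Measure Ξ) [IsProbabilityMeasure P]
    {Ω : Type*} [MeasurableSpace Ω] (Q : Measure Ω) [IsProbabilityMeasure Q]
    (ξ : ℕ → Ξ → ℝ) (hξmeas : ∀ j, Measurable (ξ j))
    (hindep : iIndepFun ξ P)
    (hgauss : ∀ j, P.map (ξ j) = gaussianReal 0 1)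
    (m : ℕ → Ω → ℝ) (hm : ∀ j, Measurable (m j))
    (b : ℕ → ℝ) (hb : ∀ᵐ q ∂Q, ∀ i, |m i q| ≤ b i)
    (Z : ℕ → Ξ → ℝ)
    (hZ : ∀ n ω, Z n ω =
      ∫ q, Real.exp (∑ j ∈ Finset.range n, (m j q * ξ j ω - (m j q) ^ 2 / 2)) ∂Q)
    (Zlim : Ξ → ℝ) (hZlimmeas : Measurable Zlim)
    (hconv : ∀ᵐ ω ∂P, Tendsto (fun n => Z n ω) atTop (nhds (Zlim ω))) :
    P {ω | Zlim ω = 0} = 0 ∨ P {ω | Zlim ω = 0} = 1 :=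
  partition_function_zero_one_law_general P Q ξ hξmeas hindep m hm b hb Z hZ Zlim hconv
end

section
/- Let m, w be random sequences on (Ω, G, Q) with all finite moments in each coordinate, and let α_n(m, w') = Σ_{j=1}^n m_j w'_j on Q⊗Q (w' an independent copy of w). For even k and n ≥ ℓ, ‖α_n(m,w') − α_ℓ(m,w')‖_{L^k}^{2k} ≤ (‖α_n(m,m')‖_{L^k}^k − ‖α_ℓ(m,m')‖_{L^k}^k)·(‖α_n(w,w')‖_{L^k}^k − ‖α_ℓ(w,w')‖_{L^k}^k), where all L^k norms are over Q⊗Q. -/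
open MeasureTheory

section Aux

variable {Ω : Type*} [MeasurableSpace Ω] (Q : Measure Ω) [IsProbabilityMeasure Q]

/-- Product bounded by sum of k-th powers of absolute values. -/
lemma prod_abs_le_sum_pow {k : ℕ} (hkpos : 0 < k) (a : Fin k → ℝ) :
    ∏ t, |a t| ≤ ∑ t, |a t| ^ k := by
  have hne : (Finset.univ : Finset (Fin k)).Nonempty := by
    haveI := Fin.pos_iff_nonempty.mp hkpos
    exact Finset.univ_nonempty
  obtain ⟨t0, _, ht0⟩ := Finset.exists_max_image Finset.univ (fun t => |a t|) hne
  calc ∏ t, |a t| ≤ ∏ _t : Fin k, |a t0| := by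
        apply Finset.prod_le_prod (fun t _ => abs_nonneg _)
        intro t ht; exact ht0 t ht
    _ = |a t0| ^ k := by simp [Finset.prod_const]
    _ ≤ ∑ t, |a t| ^ k := by
        apply Finset.single_le_sum (f := fun t => |a t| ^ k)
          (fun t _ => pow_nonneg (abs_nonneg _) _) (Finset.mem_univ t0)

lemma integrable_prod_moments (f : ℕ → Ω → ℝ) (hf : ∀ i, Measurable (f i))
    (hmom : ∀ i k : ℕ, Integrable (fun q => |f i q| ^ k) Q)
    {k : ℕ} (hkpos : 0 < k) (g : Fin k → ℕ) :
    Integrable (fun x => ∏ t, f (g t) x) Q := by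
  have hmeas : Measurable (fun x => ∏ t, f (g t) x) :=
    Finset.measurable_prod _ (fun t _ => hf (g t))
  refine Integrable.mono' (g := fun x => ∑ t, |f (g t) x| ^ k)
    (integrable_finset_sum _ (fun t _ => hmom (g t) k)) hmeas.aestronglyMeasurable ?_
  filter_upwards with x
  rw [Real.norm_eq_abs, Finset.abs_prod]
  exact prod_abs_le_sum_pow hkpos (fun t => f (g t) x)

/-- Expansion of the moment of `(∑_{j∈S} f_j(x) g_j(y))^k` over the product measure. -/
lemma integral_sum_pow (f g : ℕ → Ω → ℝ) (hf : ∀ i, Measurable (f i))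
    (hg : ∀ i, Measurable (g i))
    (hfm : ∀ i k : ℕ, Integrable (fun q => |f i q| ^ k) Q)
    (hgm : ∀ i k : ℕ, Integrable (fun q => |g i q| ^ k) Q)
    {k : ℕ} (hkpos : 0 < k) (S : Finset ℕ) :
    ∫ p : Ω × Ω, (∑ j ∈ S, f j p.1 * g j p.2) ^ k ∂(Q.prod Q)
      = ∑ i ∈ Fintype.piFinset (fun _ : Fin k => S),
          (∫ x, ∏ t, f (i t) x ∂Q) * (∫ y, ∏ t, g (i t) y ∂Q) := by
    have hexp : ∀ p : Ω × Ω, (∑ j ∈ S, f j p.1 * g j p.2) ^ k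
        = ∑ i ∈ Fintype.piFinset (fun _ : Fin k => S),
            (∏ t, f (i t) p.1) * (∏ t, g (i t) p.2) := by
      intro p
      calc (∑ j ∈ S, f j p.1 * g j p.2) ^ k
          = ∏ _t : Fin k, ∑ j ∈ S, f j p.1 * g j p.2 := by
            rw [Finset.prod_const, Finset.card_univ, Fintype.card_fin]
        _ = ∑ i ∈ Fintype.piFinset (fun _ : Fin k => S),
              ∏ t, (f (i t) p.1 * g (i t) p.2) := Finset.prod_univ_sum _ _
        _ = _ := Finset.sum_congr rfl (fun i _ => by rw [Finset.prod_mul_distrib])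
    simp_rw [hexp]
    rw [integral_finset_sum]
    · refine Finset.sum_congr rfl (fun i _ => ?_)
      exact integral_prod_mul (μ := Q) (ν := Q)
        (fun x => ∏ t, f (i t) x) (fun y => ∏ t, g (i t) y)
    · intro i _
      exact (integrable_prod_moments Q f hf hfm hkpos i).mul_prod
        (integrable_prod_moments Q g hg hgm hkpos i)

end Aux

/-- Cauchy–Schwarz-type Cauchy estimate for `α_n(m, w') = ∑_{j<n} m_j w'_j` on
`Q ⊗ Q`: for even `k` and `ℓ ≤ n`,
`‖α_n(m,w') − α_ℓ(m,w')‖_{L^k}^{2k} ≤ (‖α_n(m,m')‖_k^k − ‖α_ℓ(m,m')‖_k^k) ·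
(‖α_n(w,w')‖_k^k − ‖α_ℓ(w,w')‖_k^k)`, where all norms are over `Q ⊗ Q`.
Since `k` is even, `‖f‖_k^k = ∫ f^k` and the claim is stated with integrals. -/
theorem alpha_cauchy_estimate
    {Ω : Type*} [MeasurableSpace Ω] (Q : Measure Ω) [IsProbabilityMeasure Q]
    (m w : ℕ → Ω → ℝ)
    (hm : ∀ i, Measurable (m i)) (hw : ∀ i, Measurable (w i))
    (hmmom : ∀ i k : ℕ, Integrable (fun q => |m i q| ^ k) Q)
    (hwmom : ∀ i k : ℕ, Integrable (fun q => |w i q| ^ k) Q)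
    (k : ℕ) (hk : Even k) (hkpos : 0 < k)
    (n l : ℕ) (hln : l ≤ n) :
    (∫ p : Ω × Ω,
        ((∑ j ∈ Finset.range n, m j p.1 * w j p.2)
          - ∑ j ∈ Finset.range l, m j p.1 * w j p.2) ^ k ∂(Q.prod Q)) ^ 2
      ≤ ((∫ p : Ω × Ω, (∑ j ∈ Finset.range n, m j p.1 * m j p.2) ^ k ∂(Q.prod Q))
            - ∫ p : Ω × Ω, (∑ j ∈ Finset.range l, m j p.1 * m j p.2) ^ k ∂(Q.prod Q))
        * ((∫ p : Ω × Ω, (∑ j ∈ Finset.range n, w j p.1 * w j p.2) ^ k ∂(Q.prod Q))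
            - ∫ p : Ω × Ω, (∑ j ∈ Finset.range l, w j p.1 * w j p.2) ^ k ∂(Q.prod Q)) := by
  classical
  set A : Finset ℕ := Finset.range n \ Finset.range l with hA
  have hsub : Finset.range l ⊆ Finset.range n := Finset.range_subset_range.mpr hln
  set ρm : (Fin k → ℕ) → ℝ := fun i => ∫ x, ∏ t, m (i t) x ∂Q with hρm
  set ρw : (Fin k → ℕ) → ℝ := fun i => ∫ x, ∏ t, w (i t) x ∂Q with hρw
  -- rewrite LHS
  have hdiff : ∀ p : Ω × Ω,
      (∑ j ∈ Finset.range n, m j p.1 * w j p.2)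
        - ∑ j ∈ Finset.range l, m j p.1 * w j p.2
      = ∑ j ∈ A, m j p.1 * w j p.2 := by
    intro p
    rw [hA, Finset.sum_sdiff_eq_sub hsub]
  have hL : (∫ p : Ω × Ω,
      ((∑ j ∈ Finset.range n, m j p.1 * w j p.2)
        - ∑ j ∈ Finset.range l, m j p.1 * w j p.2) ^ k ∂(Q.prod Q))
      = ∑ i ∈ Fintype.piFinset (fun _ : Fin k => A), ρm i * ρw i := by
    simp_rw [hdiff]
    exact integral_sum_pow Q m w hm hw hmmom hwmom hkpos A
  -- rewrite RHS pieces
  have hRm : ∀ S : Finset ℕ,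
      (∫ p : Ω × Ω, (∑ j ∈ S, m j p.1 * m j p.2) ^ k ∂(Q.prod Q))
        = ∑ i ∈ Fintype.piFinset (fun _ : Fin k => S), ρm i ^ 2 := by
    intro S
    rw [integral_sum_pow Q m m hm hm hmmom hmmom hkpos S]
    exact Finset.sum_congr rfl (fun i _ => (sq (ρm i)).symm)
  have hRw : ∀ S : Finset ℕ,
      (∫ p : Ω × Ω, (∑ j ∈ S, w j p.1 * w j p.2) ^ k ∂(Q.prod Q))
        = ∑ i ∈ Fintype.piFinset (fun _ : Fin k => S), ρw i ^ 2 := by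
    intro S
    rw [integral_sum_pow Q w w hw hw hwmom hwmom hkpos S]
    exact Finset.sum_congr rfl (fun i _ => (sq (ρw i)).symm)
  rw [hL, hRm, hRm, hRw, hRw]
  -- set difference of index sets
  have hpisub : Fintype.piFinset (fun _ : Fin k => Finset.range l)
      ⊆ Fintype.piFinset (fun _ : Fin k => Finset.range n) :=
    Fintype.piFinset_subset _ _ (fun _ => hsub)
  have hApi : Fintype.piFinset (fun _ : Fin k => A)
      ⊆ Fintype.piFinset (fun _ : Fin k => Finset.range n)
          \ Fintype.piFinset (fun _ : Fin k => Finset.range l) := by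
    intro i hi
    rw [Fintype.mem_piFinset] at hi
    rw [Finset.mem_sdiff, Fintype.mem_piFinset, Fintype.mem_piFinset]
    constructor
    · intro t; exact (Finset.mem_sdiff.mp (hi t)).1
    · intro hcon
      have := (Finset.mem_sdiff.mp (hi ⟨0, hkpos⟩)).2
      exact this (hcon ⟨0, hkpos⟩)
  have hmono : ∀ ρ : (Fin k → ℕ) → ℝ,
      (∑ i ∈ Fintype.piFinset (fun _ : Fin k => A), ρ i ^ 2)
        ≤ (∑ i ∈ Fintype.piFinset (fun _ : Fin k => Finset.range n), ρ i ^ 2)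
          - ∑ i ∈ Fintype.piFinset (fun _ : Fin k => Finset.range l), ρ i ^ 2 := by
    intro ρ
    rw [← Finset.sum_sdiff_eq_sub hpisub]
    exact Finset.sum_le_sum_of_subset_of_nonneg hApi (fun i _ _ => sq_nonneg _)
  calc (∑ i ∈ Fintype.piFinset (fun _ : Fin k => A), ρm i * ρw i) ^ 2
      ≤ (∑ i ∈ Fintype.piFinset (fun _ : Fin k => A), ρm i ^ 2)
          * ∑ i ∈ Fintype.piFinset (fun _ : Fin k => A), ρw i ^ 2 :=
        Finset.sum_mul_sq_le_sq_mul_sq _ _ _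
    _ ≤ _ := by
        apply mul_le_mul (hmono ρm) (hmono ρw)
          (Finset.sum_nonneg (fun i _ => sq_nonneg _))
        exact le_trans (Finset.sum_nonneg (fun i _ => sq_nonneg _)) (hmono ρm)
end

section
/- Let (α_n) be nonnegative random variables forming a sequence with α_n → α in L^k for every k ∈ ℕ, such that E[α_n^{2k}] ≤ E[α^{2k}] for all n and k. If E cosh(α) < ∞, then E exp(α_n) → E exp(α) < ∞. -/
/-!
Expanding the exponential, `E exp g = ∑ₖ E[gᵏ] / k!` for every `g ≥ 0` with `E exp g < ∞`.
For the sequence `αₙ` the moments converge, `E[αₙᵏ] → E[αᵏ]`: by Cauchy–Schwarz,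
`|E[αₙᵏ] - E[αᵏ]| ≤ ‖αₙ - α‖₂ · k ‖max(αₙ, α)ᵏ⁻¹‖₂`, and the last factor is bounded through the
dominated moment of order `2(k - 1)`. The terms of the series are dominated uniformly in `n`:
even terms by hypothesis, odd ones through `xⁿ⁺¹/(n+1)! ≤ xⁿ/n! + xⁿ⁺²/(n+2)!`. The dominating
series is summable since `E exp α ≤ 2 E cosh α < ∞`, so Tannery's theorem gives the limit.
Integrability of `exp αₙ` comes from the same domination, which yields `E cosh αₙ ≤ E cosh α`.
-/

open MeasureTheory Filter
open scoped Nat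

lemma pow_succ_div_factorial_le {x : ℝ} (hx : 0 ≤ x) (n : ℕ) :
    x ^ (n + 1) / (n + 1)! ≤ x ^ n / n ! + x ^ (n + 2) / (n + 2)! := by
  have h₁ : x ^ (n + 1) / (n + 1)! = x ^ n / n ! * (x / (n + 1)) := by
    push_cast [Nat.factorial_succ]; field_simp; ring
  have h₂ : x ^ (n + 2) / (n + 2)! = x ^ n / n ! * (x ^ 2 / ((n + 1) * (n + 2))) := by
    push_cast [Nat.factorial_succ]; field_simp; ring
  have key : x / (n + 1) ≤ 1 + x ^ 2 / ((n + 1) * (n + 2)) := by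
    rw [div_le_iff₀ (by positivity), ← sub_nonneg]
    have : (1 + x ^ 2 / ((n + 1) * (n + 2))) * (n + 1) - x
        = ((x - (n + 2) / 2) ^ 2 + (n + 2) * (3 * n + 2) / 4) / (n + 2) := by
      field_simp; ring
    rw [this]; positivity
  rw [h₁, h₂, ← mul_one_add]
  gcongr

lemma Real.pow_two_mul_div_factorial_le_cosh (x : ℝ) (j : ℕ) :
    x ^ (2 * j) / (2 * j)! ≤ Real.cosh x :=
  le_hasSum (Real.hasSum_cosh x) j fun i _ =>
    div_nonneg ((even_two_mul i).pow_nonneg x) (by positivity)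

section

variable {Ω : Type*} [MeasurableSpace Ω] {μ : Measure Ω}

lemma integral_mul_le_sqrt_mul_sqrt {u v : Ω → ℝ} (hu₀ : 0 ≤ u) (hv₀ : 0 ≤ v)
    (hu : MemLp u 2 μ) (hv : MemLp v 2 μ) :
    ∫ ω, u ω * v ω ∂μ ≤ √(∫ ω, u ω ^ 2 ∂μ) * √(∫ ω, v ω ^ 2 ∂μ) := by
  have h := integral_mul_le_Lp_mul_Lq_of_nonneg Real.HolderConjugate.two_two
    (Eventually.of_forall hu₀) (Eventually.of_forall hv₀)
    (by rwa [ENNReal.ofReal_ofNat]) (by rwa [ENNReal.ofReal_ofNat])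
  simpa only [Real.rpow_two, Real.sqrt_eq_rpow] using h

lemma lintegral_ofReal_eq_tsum_integral {ι : Type*} [Countable ι] {F : ι → Ω → ℝ} {S : Ω → ℝ}
    (hF₀ : ∀ k ω, 0 ≤ F k ω) (hF : ∀ k, Integrable (F k) μ)
    (hS : ∀ ω, HasSum (fun k => F k ω) (S ω)) :
    ∫⁻ ω, ENNReal.ofReal (S ω) ∂μ = ∑' k, ENNReal.ofReal (∫ ω, F k ω ∂μ) := by
  simp_rw [← (hS _).tsum_eq, ENNReal.ofReal_tsum_of_nonneg (hF₀ · _) (hS _).summable,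
    lintegral_tsum fun k => (hF k).aemeasurable.ennreal_ofReal,
    ofReal_integral_eq_lintegral_ofReal (hF _) (Eventually.of_forall (hF₀ _))]

lemma integrable_pow_two_mul_of_integrable_cosh {g : Ω → ℝ} (hg : Measurable g)
    (hcosh : Integrable (fun ω => Real.cosh (g ω)) μ) (j : ℕ) :
    Integrable (fun ω => g ω ^ (2 * j)) μ := by
  refine (hcosh.const_mul (2 * j)!).mono' (by fun_prop) (Eventually.of_forall fun ω => ?_)
  rw [Real.norm_of_nonneg ((even_two_mul j).pow_nonneg _), ← div_le_iff₀' (by positivity)]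
  exact Real.pow_two_mul_div_factorial_le_cosh _ _

lemma integrable_pow_of_integrable_exp {g : Ω → ℝ} (hg : Measurable g) (hg₀ : 0 ≤ g)
    (hexp : Integrable (fun ω => Real.exp (g ω)) μ) (k : ℕ) :
    Integrable (fun ω => g ω ^ k) μ := by
  refine (hexp.const_mul k !).mono' (by fun_prop) (Eventually.of_forall fun ω => ?_)
  rw [Real.norm_of_nonneg (pow_nonneg (hg₀ ω) k), ← div_le_iff₀' (by positivity)]
  exact Real.pow_div_factorial_le_exp _ (hg₀ ω) k

lemma integrable_exp_of_integrable_cosh {g : Ω → ℝ} (hg : Measurable g)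
    (hcosh : Integrable (fun ω => Real.cosh (g ω)) μ) :
    Integrable (fun ω => Real.exp (g ω)) μ := by
  refine (hcosh.const_mul 2).mono' (by fun_prop) (Eventually.of_forall fun ω => ?_)
  rw [Real.norm_of_nonneg (Real.exp_pos _).le, Real.cosh_eq]
  linarith [Real.exp_pos (-g ω)]

lemma integrable_cosh_of_integral_pow_two_mul_le {f g : Ω → ℝ} (hf : Measurable f)
    (hg : Measurable g) (hf_int : ∀ j, Integrable (fun ω => f ω ^ (2 * j)) μ)
    (hle : ∀ j, ∫ ω, f ω ^ (2 * j) ∂μ ≤ ∫ ω, g ω ^ (2 * j) ∂μ)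
    (hcosh : Integrable (fun ω => Real.cosh (g ω)) μ) :
    Integrable (fun ω => Real.cosh (f ω)) μ := by
  have hg_int := integrable_pow_two_mul_of_integrable_cosh hg hcosh
  have series {h : Ω → ℝ} (hh : ∀ j, Integrable (fun ω => h ω ^ (2 * j)) μ) :
      ∫⁻ ω, ENNReal.ofReal (Real.cosh (h ω)) ∂μ
        = ∑' j, ENNReal.ofReal ((∫ ω, h ω ^ (2 * j) ∂μ) / (2 * j)!) := by
    simp_rw [← integral_div]
    exact lintegral_ofReal_eq_tsum_integral
      (fun j ω => div_nonneg ((even_two_mul j).pow_nonneg _) (by positivity))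
      (fun j => (hh j).div_const _) fun ω => Real.hasSum_cosh (h ω)
  rw [← lintegral_ofReal_ne_top_iff_integrable (by fun_prop)
    (Eventually.of_forall fun ω => (Real.cosh_pos _).le)] at hcosh ⊢
  refine ne_top_of_le_ne_top hcosh ?_
  rw [series hf_int, series hg_int]
  exact ENNReal.tsum_le_tsum fun j =>
    ENNReal.ofReal_le_ofReal (div_le_div_of_nonneg_right (hle j) (by positivity))

lemma hasSum_integral_pow_div_factorial {g : Ω → ℝ} (hg : Measurable g) (hg₀ : 0 ≤ g)
    (hexp : Integrable (fun ω => Real.exp (g ω)) μ) :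
    HasSum (fun k => (∫ ω, g ω ^ k ∂μ) / k !) (∫ ω, Real.exp (g ω) ∂μ) := by
  have hseries (x : ℝ) : HasSum (fun k => x ^ k / k !) (Real.exp x) := by
    simpa only [Real.exp_eq_exp_ℝ] using NormedSpace.expSeries_div_hasSum_exp x
  simp_rw [← integral_div]
  refine hasSum_integral_of_dominated_convergence (fun k ω => g ω ^ k / k !) (fun k => by fun_prop)
    (fun k => ae_of_all _ fun ω =>
      (Real.norm_of_nonneg (div_nonneg (pow_nonneg (hg₀ ω) k) (by positivity))).le)
    (ae_of_all _ fun ω => (hseries _).summable) ?_ (ae_of_all _ fun ω => hseries _)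
  simpa only [fun ω => (hseries (g ω)).tsum_eq] using hexp

lemma integral_pow_succ_div_factorial_le {f : Ω → ℝ} (hf₀ : 0 ≤ f)
    (hf : ∀ k, Integrable (fun ω => f ω ^ k) μ) (n : ℕ) :
    (∫ ω, f ω ^ (n + 1) ∂μ) / (n + 1)!
      ≤ (∫ ω, f ω ^ n ∂μ) / n ! + (∫ ω, f ω ^ (n + 2) ∂μ) / (n + 2)! := by
  simp_rw [← integral_div]
  rw [← integral_add ((hf _).div_const _) ((hf _).div_const _)]
  exact integral_mono ((hf _).div_const _) (((hf _).div_const _).add ((hf _).div_const _))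
    fun ω => pow_succ_div_factorial_le (hf₀ ω) n

lemma integral_pow_div_factorial_le_of_integral_pow_two_mul_le {f g : Ω → ℝ}
    (hf₀ : 0 ≤ f) (hg₀ : 0 ≤ g) (hf : ∀ k, Integrable (fun ω => f ω ^ k) μ)
    (hle : ∀ j, ∫ ω, f ω ^ (2 * j) ∂μ ≤ ∫ ω, g ω ^ (2 * j) ∂μ) (k : ℕ) :
    (∫ ω, f ω ^ k ∂μ) / k ! ≤ (∫ ω, g ω ^ (k - 1) ∂μ) / (k - 1)!
      + (∫ ω, g ω ^ k ∂μ) / k ! + (∫ ω, g ω ^ (k + 1) ∂μ) / (k + 1)! := by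
  have hg_nonneg (i : ℕ) : 0 ≤ (∫ ω, g ω ^ i ∂μ) / i ! :=
    div_nonneg (integral_nonneg fun ω => pow_nonneg (hg₀ ω) i) (by positivity)
  have hle' (j : ℕ) : (∫ ω, f ω ^ (2 * j) ∂μ) / (2 * j)! ≤ (∫ ω, g ω ^ (2 * j) ∂μ) / (2 * j)! :=
    div_le_div_of_nonneg_right (hle j) (by positivity)
  obtain ⟨j, rfl | rfl⟩ := Nat.even_or_odd' k
  · linarith [hle' j, hg_nonneg (2 * j - 1), hg_nonneg (2 * j + 1)]
  · have hodd := integral_pow_succ_div_factorial_le hf₀ hf (2 * j)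
    have hnext := hle' (j + 1)
    rw [mul_add_one] at hnext
    simp only [Nat.add_sub_cancel]
    linarith [hle' j, hg_nonneg (2 * j + 1)]

lemma sq_mul_max_pow_le (x y : ℝ) (k : ℕ) :
    (k * max x y ^ (k - 1)) ^ 2 ≤ k ^ 2 * (x ^ (2 * (k - 1)) + y ^ (2 * (k - 1))) := by
  rw [mul_pow, ← pow_mul, mul_comm (k - 1)]
  gcongr
  rcases le_total x y with h | h
  · rw [max_eq_right h]; linarith [(even_two_mul (k - 1)).pow_nonneg x]
  · rw [max_eq_left h]; linarith [(even_two_mul (k - 1)).pow_nonneg y]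

lemma abs_integral_pow_sub_integral_pow_le {f g : Ω → ℝ} (hfm : Measurable f) (hgm : Measurable g)
    (hf₀ : 0 ≤ f) (hg₀ : 0 ≤ g) (hf : ∀ j, Integrable (fun ω => f ω ^ j) μ)
    (hg : ∀ j, Integrable (fun ω => g ω ^ j) μ) (k : ℕ) :
    |∫ ω, f ω ^ k ∂μ - ∫ ω, g ω ^ k ∂μ| ≤ √(∫ ω, |f ω - g ω| ^ 2 ∂μ)
      * √(k ^ 2 * (∫ ω, f ω ^ (2 * (k - 1)) ∂μ + ∫ ω, g ω ^ (2 * (k - 1)) ∂μ)) := by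
  set h : Ω → ℝ := fun ω => k * max (f ω) (g ω) ^ (k - 1)
  have hu : MemLp (fun ω => |f ω - g ω|) 2 μ := by
    have hsq {u : Ω → ℝ} (hu : Measurable u) (hu₂ : Integrable (fun ω => u ω ^ 2) μ) :
        MemLp u 2 μ :=
      (memLp_two_iff_integrable_sq hu.aestronglyMeasurable).2 hu₂
    exact ((hsq hfm (hf 2)).sub (hsq hgm (hg 2))).abs
  have hbound : Integrable (fun ω => k ^ 2 * (f ω ^ (2 * (k - 1)) + g ω ^ (2 * (k - 1)))) μ :=
    ((hf _).add (hg _)).const_mul _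
  have hh : MemLp h 2 μ := by
    refine (memLp_two_iff_integrable_sq (by fun_prop)).2 <|
      hbound.mono' (by fun_prop) (ae_of_all _ fun ω => ?_)
    rw [Real.norm_of_nonneg (sq_nonneg _)]
    exact sq_mul_max_pow_le (f ω) (g ω) k
  have hpointwise (ω : Ω) : |f ω ^ k - g ω ^ k| ≤ |f ω - g ω| * h ω := by
    have := abs_pow_sub_pow_le (f ω) (g ω) k
    rwa [abs_of_nonneg (hf₀ ω), abs_of_nonneg (hg₀ ω), mul_assoc] at this
  calc |∫ ω, f ω ^ k ∂μ - ∫ ω, g ω ^ k ∂μ|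
      ≤ ∫ ω, |f ω ^ k - g ω ^ k| ∂μ := by
        rw [← integral_sub (hf k) (hg k)]; exact abs_integral_le_integral_abs
    _ ≤ ∫ ω, |f ω - g ω| * h ω ∂μ :=
        integral_mono ((hf k).sub (hg k)).abs (hu.integrable_mul hh) hpointwise
    _ ≤ √(∫ ω, |f ω - g ω| ^ 2 ∂μ) * √(∫ ω, h ω ^ 2 ∂μ) :=
        integral_mul_le_sqrt_mul_sqrt (fun ω => abs_nonneg _)
          (fun ω => mul_nonneg k.cast_nonneg (pow_nonneg (le_max_of_le_left (hf₀ ω)) _)) hu hh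
    _ ≤ _ := by
        gcongr
        rw [← integral_add (hf _) (hg _), ← integral_const_mul]
        exact integral_mono hh.integrable_sq hbound
          fun ω => sq_mul_max_pow_le (f ω) (g ω) k

lemma tendsto_integral_pow_of_tendsto_integral_abs_sub_sq {f : ℕ → Ω → ℝ} {g : Ω → ℝ}
    (hfm : ∀ n, Measurable (f n)) (hgm : Measurable g) (hf₀ : ∀ n, 0 ≤ f n) (hg₀ : 0 ≤ g)
    (hf : ∀ n j, Integrable (fun ω => f n ω ^ j) μ) (hg : ∀ j, Integrable (fun ω => g ω ^ j) μ)
    (hfg : Tendsto (fun n => ∫ ω, |f n ω - g ω| ^ 2 ∂μ) atTop (nhds 0))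
    {C : ℝ} (k : ℕ) (hbdd : ∀ n, ∫ ω, f n ω ^ (2 * (k - 1)) ∂μ ≤ C) :
    Tendsto (fun n => ∫ ω, f n ω ^ k ∂μ) atTop (nhds (∫ ω, g ω ^ k ∂μ)) := by
  set c := √(k ^ 2 * (C + ∫ ω, g ω ^ (2 * (k - 1)) ∂μ)) with hc
  have hbound : Tendsto (fun n => √(∫ ω, |f n ω - g ω| ^ 2 ∂μ) * c) atTop (nhds 0) := by
    simpa only [Real.sqrt_zero, zero_mul] using hfg.sqrt.mul_const c
  rw [← tendsto_sub_nhds_zero_iff]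
  refine squeeze_zero_norm (fun n => ?_) hbound
  refine (abs_integral_pow_sub_integral_pow_le (hfm n) hgm (hf₀ n) hg₀ (hf n) hg k).trans ?_
  rw [hc]
  gcongr
  exact hbdd n

end

theorem exp_moment_convergence_of_cosh_general
    {Ω : Type*} [MeasurableSpace Ω] (μ : Measure Ω)
    (α : ℕ → Ω → ℝ) (a : Ω → ℝ)
    (hmeas : ∀ n, Measurable (α n)) (hameas : Measurable a)
    (hpos : ∀ n ω, 0 ≤ α n ω) (hapos : ∀ ω, 0 ≤ a ω)
    (hLk : ∀ k : ℕ, 1 ≤ k →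
      Tendsto (fun n => ∫ ω, |α n ω - a ω| ^ k ∂μ) atTop (nhds 0))
    (hintn : ∀ n k : ℕ, Integrable (fun ω => (α n ω) ^ (2 * k)) μ)
    (hdom : ∀ n k : ℕ,
      (∫ ω, (α n ω) ^ (2 * k) ∂μ) ≤ ∫ ω, (a ω) ^ (2 * k) ∂μ)
    (hcosh : Integrable (fun ω => Real.cosh (a ω)) μ) :
    Integrable (fun ω => Real.exp (a ω)) μ ∧
      Tendsto (fun n => ∫ ω, Real.exp (α n ω) ∂μ) atTop
        (nhds (∫ ω, Real.exp (a ω) ∂μ)) := by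
  have hexp_a := integrable_exp_of_integrable_cosh hameas hcosh
  have hexp_α (n : ℕ) : Integrable (fun ω => Real.exp (α n ω)) μ :=
    integrable_exp_of_integrable_cosh (hmeas n)
      (integrable_cosh_of_integral_pow_two_mul_le (hmeas n) hameas (hintn n) (hdom n) hcosh)
  have hpow_α (n : ℕ) := integrable_pow_of_integrable_exp (hmeas n) (hpos n) (hexp_α n)
  have hseries_a := hasSum_integral_pow_div_factorial hameas hapos hexp_a
  set m : ℕ → ℝ := fun k => (∫ ω, a ω ^ k ∂μ) / (k ! : ℝ)
  have hbound : Summable fun k => m (k - 1) + m k + m (k + 1) :=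
    (((summable_nat_add_iff 1).1 (by simpa using hseries_a.summable)).add
      hseries_a.summable).add ((summable_nat_add_iff 1).2 hseries_a.summable)
  refine ⟨hexp_a, ?_⟩
  simp_rw [← hseries_a.tsum_eq,
    ← (hasSum_integral_pow_div_factorial (hmeas _) (hpos _) (hexp_α _)).tsum_eq]
  refine tendsto_tsum_of_dominated_convergence hbound (fun k => ?_)
    (Eventually.of_forall fun n k => ?_)
  · exact (tendsto_integral_pow_of_tendsto_integral_abs_sub_sq hmeas hameas hpos hapos hpow_α
      (integrable_pow_of_integrable_exp hameas hapos hexp_a) (hLk 2 one_le_two) k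
      (hdom · (k - 1))).div_const _
  · rw [Real.norm_of_nonneg
      (div_nonneg (integral_nonneg fun ω => pow_nonneg (hpos n ω) k) (by positivity))]
    exact integral_pow_div_factorial_le_of_integral_pow_two_mul_le (hpos n) hapos (hpow_α n)
      (hdom n) k

/-- If `α_n ≥ 0` converge to `α` in every `L^k`, the even moments of `α_n` are
dominated by those of `α`, and `E cosh α < ∞`, then `E exp(α_n) → E exp(α) < ∞`. -/
theorem exp_moment_convergence_of_cosh
    {Ω : Type*} [MeasurableSpace Ω] (μ : Measure Ω) [IsProbabilityMeasure μ]
    (α : ℕ → Ω → ℝ) (a : Ω → ℝ)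
    (hmeas : ∀ n, Measurable (α n)) (hameas : Measurable a)
    (hpos : ∀ n ω, 0 ≤ α n ω) (hapos : ∀ ω, 0 ≤ a ω)
    (hLk : ∀ k : ℕ, 1 ≤ k →
      Tendsto (fun n => ∫ ω, |α n ω - a ω| ^ k ∂μ) atTop (nhds 0))
    (hintn : ∀ n k : ℕ, Integrable (fun ω => (α n ω) ^ (2 * k)) μ)
    (hdom : ∀ n k : ℕ,
      (∫ ω, (α n ω) ^ (2 * k) ∂μ) ≤ ∫ ω, (a ω) ^ (2 * k) ∂μ)
    (hcosh : Integrable (fun ω => Real.cosh (a ω)) μ) :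
    Integrable (fun ω => Real.exp (a ω)) μ ∧
      Tendsto (fun n => ∫ ω, Real.exp (α n ω) ∂μ) atTop
        (nhds (∫ ω, Real.exp (a ω) ∂μ)) :=
  exp_moment_convergence_of_cosh_general μ α a hmeas hameas hpos hapos hLk hintn hdom hcosh
end
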